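/- For every integer k >= 0, the minimum number of crossings among all doubly-anchored open meanders lying in the genus-zero stratum Q(k, -1^{k+4}) is exactly k+1. -/

import Mathlib

/-!
Combinatorial model of meanders.  The crossings of a meander with a horizontal
line are the points `0, 1, …` of a `Fin` type, read along the line.  The arcs of
the transversal curve lying above (resp. below) the line form a noncrossing
partial matching of the crossings, encoded as an involutive permutation whose
fixed points are the unmatched (free) points.  A complementary region of the
configuration directly below an arc having `c` directly nested children arcs and
`t` free (anchored) ends inside it is a `(2(c+t-1)+4)`-gon, hence corresponds to
a zero of order `c+t-1`; the outer region on one side of the line with `T`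
top-level arcs and `s` uncovered free ends is a `(2(T+s-2)+4)`-gon, a zero of
order `T+s-2`.  Zeros of order `0` are square regions (regular points) and zeros
of order `-1` are bigons (simple poles).
-/

namespace PaperMeanders

/-- `i` is the left endpoint of an arc of the partial matching `f`. -/
def IsArc {m : ℕ} (f : Equiv.Perm (Fin m)) (i : Fin m) : Prop := i < f i

/-- The arc with left endpoint `i` covers the point `p`. -/
def Covers {m : ℕ} (f : Equiv.Perm (Fin m)) (i p : Fin m) : Prop :=
  IsArc f i ∧ i < p ∧ p < f i

/-- The arc with left endpoint `j` strictly contains the arc with left endpoint `i`. -/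
def Nests {m : ℕ} (f : Equiv.Perm (Fin m)) (j i : Fin m) : Prop :=
  IsArc f j ∧ IsArc f i ∧ j < i ∧ f i < f j

/-- The arc `i` is nested directly inside the arc `j` (no arc strictly between). -/
def DirectChild {m : ℕ} (f : Equiv.Perm (Fin m)) (j i : Fin m) : Prop :=
  Nests f j i ∧ ∀ a, Nests f j a → ¬ Nests f a i

/-- `p` is a free (unmatched) point of the matching. -/
def IsFree {m : ℕ} (f : Equiv.Perm (Fin m)) (p : Fin m) : Prop := f p = p

/-- The free end `p` lies in the region directly below the arc `i`,
i.e. `i` is the innermost arc covering `p`. -/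
def FreeEndUnder {m : ℕ} (f : Equiv.Perm (Fin m)) (i p : Fin m) : Prop :=
  IsFree f p ∧ Covers f i p ∧ ∀ b, Covers f b p → ¬ Nests f i b

/-- The arc `i` is a top-level arc of the matching. -/
def IsTop {m : ℕ} (f : Equiv.Perm (Fin m)) (i : Fin m) : Prop :=
  IsArc f i ∧ ∀ j, ¬ Nests f j i

/-- The free end `p` is covered by no arc: it lies in the outer region. -/
def FreeEndOutside {m : ℕ} (f : Equiv.Perm (Fin m)) (p : Fin m) : Prop :=
  IsFree f p ∧ ∀ b, ¬ Covers f b p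

/-- The matching `f` is noncrossing (its arcs are pairwise disjoint or nested). -/
def Noncrossing {m : ℕ} (f : Equiv.Perm (Fin m)) : Prop :=
  ¬ ∃ i j : Fin m, i < j ∧ j < f i ∧ f i < f j

/-- The order of the zero carried by the complementary region directly below the
arc `i`. -/
noncomputable def arcOrder {m : ℕ} (f : Equiv.Perm (Fin m)) (i : Fin m) : ℤ :=
  (Nat.card {j // DirectChild f i j} : ℤ) + (Nat.card {p // FreeEndUnder f i p} : ℤ) - 1

/-- The order of the zero carried by the outer complementary region on this side
of the line. -/
noncomputable def outerOrder {m : ℕ} (f : Equiv.Perm (Fin m)) : ℤ :=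
  (Nat.card {i // IsTop f i} : ℤ) + (Nat.card {p // FreeEndOutside f p} : ℤ) - 2

/-- The multiset of the orders of the complementary regions below the arcs of `f`. -/
noncomputable def arcOrders {m : ℕ} (f : Equiv.Perm (Fin m)) : Multiset ℤ :=
  (Finset.univ.filter (fun i : Fin m => i < f i)).val.map (arcOrder f)

/-- The multiset of the orders of all complementary regions on one side of the line. -/
noncomputable def faceOrders {m : ℕ} (f : Equiv.Perm (Fin m)) : Multiset ℤ :=
  outerOrder f ::ₘ arcOrders f

/-- A configuration whose complementary regions and anchor points carry the
multiset `orders` of zero orders lies in the genus-zero stratum `Q(K)`: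
the nonzero orders agree with the nonzero entries of `K`, and every zero of
order `0` listed in `K` is realised by a square region (further unmarked square
regions are allowed). -/
def MatchesStratum (orders K : Multiset ℤ) : Prop :=
  orders.filter (· ≠ 0) = K.filter (· ≠ 0) ∧ K.count 0 ≤ orders.count 0

/-- The crossing carried by a half-edge position.  Cutting the sphere open along
the anchored horizontal line (an arc from the anchored end `P₁` through the
crossings `1, …, n` to the anchored end `P₂`) produces a disk; its boundary
carries the `2n` transversal half-edges in the linear order
`n⁻, …, 1⁻, 1⁺, …, n⁺` (positions `0, …, 2n-1`), where `i⁻` and `i⁺` are the two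
half-edges of the transversal at the crossing `i`. -/
def crossingOf (n : ℕ) (p : Fin (2 * n)) : ℕ :=
  if (p : ℕ) < n then n - 1 - (p : ℕ) else (p : ℕ) - n

/-- A doubly-anchored open meander: a horizontal line anchored at two punctures
together with a transversal arc anchored at two punctures, crossing the line
transversally at `n` points and never passing around the ends of the line.  In
the cut-open (disk) picture the transversal arcs form a noncrossing partial
matching of the `2n` half-edge positions with exactly two free (anchored) ends,
no arc joining the lower block to the upper block (arcs stay on one side of the
line), gluing up into a single arc through all the crossings. -/
structure DoublyAnchoredOpenMeander where
  /-- the number of crossings -/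
  n : ℕ
  /-- the noncrossing matching of the half-edge positions by the transversal arcs -/
  arcs : Equiv.Perm (Fin (2 * n))
  arcs_invol : ∀ i, arcs (arcs i) = i
  arcs_noncrossing : Noncrossing arcs
  /-- each arc stays in the upper or in the lower half-plane: no arc passes
  around an end of the horizontal line -/
  no_wrap : ∀ i : Fin (2 * n), (i : ℕ) < n ↔ ((arcs i : Fin (2 * n)) : ℕ) < n
  /-- the transversal arc has exactly two anchored ends -/
  two_free_ends : Nat.card {p // arcs p = p} = 2
  /-- the arcs glue up into a single transversal arc through all the crossings -/
  single_arc : ∀ i j : Fin (2 * n),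
    Relation.ReflTransGen
      (fun a b => (arcs a = b ∧ a ≠ b) ∨ crossingOf n a = crossingOf n b) i j

/-- The number of crossings of a doubly-anchored open meander. -/
def DoublyAnchoredOpenMeander.crossings (M : DoublyAnchoredOpenMeander) : ℕ := M.n

/-- The multiset of orders of the zeros carried by the complementary regions of a
doubly-anchored open meander, together with one simple pole for each of the four
anchor points (valence-one vertices). -/
noncomputable def DoublyAnchoredOpenMeander.orders
    (M : DoublyAnchoredOpenMeander) : Multiset ℤ :=
  faceOrders M.arcs + Multiset.replicate 4 (-1)

/-- The doubly-anchored open meander lies in the genus-zero stratum `Q(K)`. -/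
def DoublyAnchoredOpenMeander.InStratum (M : DoublyAnchoredOpenMeander)
    (K : Multiset ℤ) : Prop :=
  MatchesStratum M.orders K

/-!
A meander with `n` crossings has `2n` half-edge positions, two of them free, hence `n - 1` arcs.
Each arc bounds one region and the outer region is one more, so together with the four anchor
points the meander carries exactly `n + 4` zero orders. For `k > 0` the stratum
`Q(k, -1^{k+4})` prescribes `k + 5` nonzero orders, which forces `n ≥ k + 1`; for `k = 0` the
bound `n ≥ 1` comes from the two free ends. Conversely, the snake with `k + 1` crossings, all of
whose arcs join neighbouring positions, has a bigon under each of its `k` arcs, and its outer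
region, bounded by `k` arcs and two anchored ends, has order `k`.
-/

section Matchings

variable {m : ℕ} {f : Equiv.Perm (Fin m)}

theorem Nests.covers {i j : Fin m} (h : Nests f j i) : Covers f j i :=
  ⟨h.1, h.2.2.1, h.2.1.trans h.2.2.2⟩

theorem two_mul_card_arcs_add_card_fixed (hf : Function.Involutive f) :
    2 * (Finset.univ.filter fun i : Fin m => i < f i).card + Nat.card {p // f p = p} = m := by
  have hswap : (Finset.univ.filter fun i : Fin m => f i < i).card
      = (Finset.univ.filter fun i : Fin m => i < f i).card :=
    Finset.card_nbij' f f (fun i hi => by simp_all [hf i]) (fun i hi => by simp_all [hf i])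
      (fun i _ => hf i) (fun i _ => hf i)
  have htri : ∀ i : Fin m, (if i < f i then 1 else 0) + (if f i < i then 1 else 0)
      + (if f i = i then 1 else 0) = 1 := fun i => by
    rcases lt_trichotomy i (f i) with h | h | h
    · simp [h, h.ne', h.not_gt]
    · simp [← h]
    · simp [h, h.ne, h.not_gt]
  have hsum := Finset.sum_congr rfl fun i (_ : i ∈ Finset.univ) => htri i
  simp only [Finset.sum_add_distrib, Finset.sum_boole, Nat.cast_id, Finset.sum_const,
    Finset.card_univ, Fintype.card_fin, smul_eq_mul, mul_one] at hsum
  rw [Nat.card_eq_fintype_card, Fintype.card_subtype]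
  omega

theorem card_faceOrders :
    Multiset.card (faceOrders f) = (Finset.univ.filter fun i : Fin m => i < f i).card + 1 := by
  rw [faceOrders, arcOrders, Multiset.card_cons, Multiset.card_map]
  rfl

def AdjacentArcs (f : Equiv.Perm (Fin m)) : Prop :=
  ∀ i, IsArc f i → (f i : ℕ) = i + 1

namespace AdjacentArcs

theorem not_covers (hf : AdjacentArcs f) (i p : Fin m) : ¬ Covers f i p := by
  rintro ⟨hi, hip, hpf⟩
  have := hf i hi
  rw [Fin.lt_def] at hip hpf
  omega

theorem noncrossing (hf : AdjacentArcs f) : Noncrossing f :=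
  fun ⟨i, j, hij, hjf, _⟩ => hf.not_covers i j ⟨hij.trans hjf, hij, hjf⟩

theorem arcOrder_eq (hf : AdjacentArcs f) (i : Fin m) : arcOrder f i = -1 := by
  have : IsEmpty {j // DirectChild f i j} := ⟨fun j => hf.not_covers _ _ j.2.1.covers⟩
  have : IsEmpty {p // FreeEndUnder f i p} := ⟨fun p => hf.not_covers _ _ p.2.2.1⟩
  simp [arcOrder]

theorem arcOrders_eq (hf : AdjacentArcs f) :
    arcOrders f = Multiset.replicate (Finset.univ.filter fun i : Fin m => i < f i).card (-1) := by
  rw [arcOrders, Multiset.map_congr rfl fun i _ => hf.arcOrder_eq i, Multiset.map_const']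
  rfl

theorem outerOrder_eq (hf : AdjacentArcs f) : outerOrder f
    = (Finset.univ.filter fun i : Fin m => i < f i).card + Nat.card {p // f p = p} - 2 := by
  have htop : {i // IsTop f i} ≃ {i // i < f i} :=
    Equiv.subtypeEquivRight fun i =>
      ⟨And.left, fun h => ⟨h, fun j hj => hf.not_covers _ _ hj.covers⟩⟩
  have hout : {p // FreeEndOutside f p} ≃ {p // f p = p} :=
    Equiv.subtypeEquivRight fun p => ⟨And.left, fun h => ⟨h, fun b => hf.not_covers b p⟩⟩
  rw [outerOrder, Nat.card_congr htop, Nat.card_congr hout, Nat.card_eq_fintype_card,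
    Fintype.card_subtype]

end AdjacentArcs

end Matchings

theorem MatchesStratum.card_filter_ne_zero_le {orders K : Multiset ℤ}
    (h : MatchesStratum orders K) : Multiset.card (K.filter (· ≠ 0)) ≤ Multiset.card orders :=
  h.1 ▸ Multiset.card_le_card (Multiset.filter_le _ _)

def ArcStep {n : ℕ} (f : Equiv.Perm (Fin (2 * n))) (a b : Fin (2 * n)) : Prop :=
  (f a = b ∧ a ≠ b) ∨ crossingOf n a = crossingOf n b

theorem ArcStep.symm {n : ℕ} {f : Equiv.Perm (Fin (2 * n))} (hf : Function.Involutive f)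
    {a b : Fin (2 * n)} : ArcStep f a b → ArcStep f b a := by
  rintro (⟨rfl, hab⟩ | h)
  · exact Or.inl ⟨hf a, hab.symm⟩
  · exact Or.inr h.symm

namespace DoublyAnchoredOpenMeander

theorem two_mul_card_arcs_add_two (M : DoublyAnchoredOpenMeander) :
    2 * (Finset.univ.filter fun i => i < M.arcs i).card + 2 = 2 * M.n := by
  simpa only [M.two_free_ends] using two_mul_card_arcs_add_card_fixed M.arcs_invol

theorem crossings_pos (M : DoublyAnchoredOpenMeander) : 0 < M.crossings := by
  have := M.two_mul_card_arcs_add_two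
  rw [crossings]
  omega

theorem card_orders (M : DoublyAnchoredOpenMeander) : Multiset.card M.orders = M.n + 4 := by
  have := M.two_mul_card_arcs_add_two
  rw [orders, Multiset.card_add, card_faceOrders, Multiset.card_replicate]
  omega

theorem orders_of_adjacentArcs (M : DoublyAnchoredOpenMeander) (hM : AdjacentArcs M.arcs) :
    M.orders = ((M.n : ℤ) - 1) ::ₘ Multiset.replicate (M.n - 1 + 4) (-1) := by
  have hcard := M.two_mul_card_arcs_add_two
  have harcs : (Finset.univ.filter fun i => i < M.arcs i).card = M.n - 1 := by omega
  rw [orders, faceOrders, hM.arcOrders_eq, hM.outerOrder_eq, M.two_free_ends, harcs,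
    Multiset.cons_add, Multiset.replicate_add]
  congr 1
  omega

end DoublyAnchoredOpenMeander

/-- The partner of a position in the snake meander, which runs through the crossings
`0, 1, …, n - 1` in this order: its upper arcs join the crossings `2j, 2j + 1`, its lower arcs
the crossings `2j + 1, 2j + 2`, and it is anchored below crossing `0` and at whichever
half-edge of crossing `n - 1` is left over. -/
def snakePartner (n p : ℕ) : ℕ :=
  if p < n then
    if p + 1 = n then p
    else if (n - 1 - p) % 2 = 0 then p + 1
    else if p = 0 then p else p - 1
  else
    if (p - n) % 2 = 1 then p - 1
    else if p + 1 = 2 * n then p else p + 1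

section Snake

variable {n p : ℕ}

theorem snakePartner_lt (h : p < 2 * n) : snakePartner n p < 2 * n := by
  unfold snakePartner; split_ifs <;> omega

theorem snakePartner_snakePartner (h : p < 2 * n) : snakePartner n (snakePartner n p) = p := by
  unfold snakePartner; split_ifs <;> first | omega | contradiction

theorem snakePartner_lt_iff (h : p < 2 * n) : snakePartner n p < n ↔ p < n := by
  unfold snakePartner; split_ifs <;> omega

theorem snakePartner_eq_succ (h : p < snakePartner n p) : snakePartner n p = p + 1 := by
  unfold snakePartner at *; split_ifs at * <;> omega

theorem snakePartner_eq_self_iff (h : p < 2 * n) : snakePartner n p = p ↔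
    p = n - 1 ∨ p = if n % 2 = 0 then 0 else 2 * n - 1 := by
  unfold snakePartner; split_ifs <;> omega

def snakeArcs (n : ℕ) : Equiv.Perm (Fin (2 * n)) :=
  Function.Involutive.toPerm (fun p => ⟨snakePartner n p, snakePartner_lt p.isLt⟩)
    fun p => Fin.ext (snakePartner_snakePartner p.isLt)

@[simp] theorem snakeArcs_val (p : Fin (2 * n)) : (snakeArcs n p : ℕ) = snakePartner n p := rfl

theorem snakeArcs_involutive : Function.Involutive (snakeArcs n) :=
  fun p => Fin.ext (snakePartner_snakePartner p.isLt)

theorem adjacentArcs_snakeArcs : AdjacentArcs (snakeArcs n) :=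
  fun _ hp => snakePartner_eq_succ hp

theorem card_fixed_snakeArcs (hn : 0 < n) : Nat.card {p // snakeArcs n p = p} = 2 := by
  rw [Nat.card_eq_fintype_card, Fintype.card_subtype]
  convert Finset.card_pair (a := (⟨n - 1, by omega⟩ : Fin (2 * n)))
    (b := ⟨if n % 2 = 0 then 0 else 2 * n - 1, by split_ifs <;> omega⟩)
    (by rw [ne_eq, Fin.ext_iff]; dsimp only; split_ifs <;> omega)
  ext p
  simp only [Finset.mem_filter, Finset.mem_univ, true_and, Finset.mem_insert,
    Finset.mem_singleton, Fin.ext_iff, snakeArcs_val, snakePartner_eq_self_iff p.isLt]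

theorem arcStep_snakeArcs_lower_succ {c : ℕ} (hc : c + 1 < n) :
    Relation.ReflTransGen (ArcStep (snakeArcs n))
      ⟨n - 1 - (c + 1), by omega⟩ ⟨n - 1 - c, by omega⟩ := by
  have arc {a b : Fin (2 * n)} (h : snakePartner n a = b) (hab : (a : ℕ) ≠ b) :
      ArcStep (snakeArcs n) a b :=
    Or.inl ⟨Fin.ext h, fun h' => hab (congrArg Fin.val h')⟩
  have cross {a b : Fin (2 * n)} (h : crossingOf n a = crossingOf n b) :
      ArcStep (snakeArcs n) a b :=
    Or.inr h
  rcases Nat.even_or_odd c with ⟨j, rfl⟩ | ⟨j, rfl⟩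
  · -- the snake passes from crossing `2j + 1` to crossing `2j` above the line
    refine .head (b := ⟨n + (j + j + 1), by omega⟩) (cross ?_) <|
      .head (b := ⟨n + (j + j), by omega⟩) (arc ?_ (by dsimp only; omega)) <| .single (cross ?_)
    all_goals simp only [crossingOf, snakePartner]; split_ifs <;> omega
  · exact .single (arc (by simp only [snakePartner]; split_ifs <;> omega) (by dsimp only; omega))

theorem reflTransGen_snakeArcs_lower {c : ℕ} (hc : c < n) :
    Relation.ReflTransGen (ArcStep (snakeArcs n)) ⟨n - 1 - c, by omega⟩ ⟨n - 1, by omega⟩ := by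
  induction c with
  | zero => rfl
  | succ c ih => exact (arcStep_snakeArcs_lower_succ hc).trans (ih (by omega))

theorem reflTransGen_snakeArcs (hn : 0 < n) (p : Fin (2 * n)) :
    Relation.ReflTransGen (ArcStep (snakeArcs n)) p ⟨n - 1, by omega⟩ := by
  obtain ⟨p, hp⟩ := p
  by_cases hpn : p < n
  · obtain ⟨c, hc, rfl⟩ : ∃ c < n, p = n - 1 - c := ⟨n - 1 - p, by omega, by omega⟩
    exact reflTransGen_snakeArcs_lower hc
  · refine .head (Or.inr ?_) (reflTransGen_snakeArcs_lower (c := p - n) (by omega))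
    simp only [crossingOf]
    split_ifs <;> omega

end Snake

def snake (n : ℕ) (hn : 0 < n) : DoublyAnchoredOpenMeander where
  n := n
  arcs := snakeArcs n
  arcs_invol := snakeArcs_involutive
  arcs_noncrossing := adjacentArcs_snakeArcs.noncrossing
  no_wrap p := (snakePartner_lt_iff p.isLt).symm
  two_free_ends := card_fixed_snakeArcs hn
  single_arc i j :=
    have : Std.Symm (ArcStep (snakeArcs n)) := ⟨fun _ _ => ArcStep.symm snakeArcs_involutive⟩
    (reflTransGen_snakeArcs hn i).trans (Std.Symm.symm _ _ (reflTransGen_snakeArcs hn j))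

theorem orders_snake {n : ℕ} (hn : 0 < n) :
    (snake n hn).orders = ((n : ℤ) - 1) ::ₘ Multiset.replicate (n - 1 + 4) (-1) :=
  (snake n hn).orders_of_adjacentArcs adjacentArcs_snakeArcs

/-- **Proposition 4.4.**  For every integer `k ≥ 0`, the minimum number of
crossings among all doubly-anchored open meanders lying in the genus-zero
stratum `Q(k, -1^{k+4})` is exactly `k + 1`. -/
theorem min_crossings_doublyAnchoredOpenMeander (k : ℕ) :
    IsLeast {c : ℕ | ∃ M : DoublyAnchoredOpenMeander,
        M.InStratum ((k : ℤ) ::ₘ Multiset.replicate (k + 4) (-1 : ℤ)) ∧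
        M.crossings = c}
      (k + 1) := by
  refine ⟨⟨snake (k + 1) k.succ_pos, ?_, rfl⟩, ?_⟩
  · rw [DoublyAnchoredOpenMeander.InStratum, orders_snake, Nat.add_sub_cancel, Nat.cast_succ,
      add_sub_cancel_right]
    exact ⟨rfl, le_rfl⟩
  · rintro c ⟨M, hM, rfl⟩
    rcases k.eq_zero_or_pos with rfl | hk
    · exact M.crossings_pos
    have hK : ((k : ℤ) ::ₘ Multiset.replicate (k + 4) (-1 : ℤ)).filter (· ≠ 0)
        = (k : ℤ) ::ₘ Multiset.replicate (k + 4) (-1 : ℤ) :=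
      Multiset.filter_eq_self.2 fun a ha => by
        rcases Multiset.mem_cons.1 ha with rfl | ha
        · exact_mod_cast hk.ne'
        · rw [Multiset.eq_of_mem_replicate ha]; decide
    have := hM.card_filter_ne_zero_le
    rw [hK, M.card_orders, Multiset.card_cons, Multiset.card_replicate] at this
    show k + 1 ≤ M.n
    omega

end PaperMeanders
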